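/- Let $S_1,\ldots,S_K$ be mutually independent random symmetric $p\times p$ real matrices with finite second moments and $E[S_k]=M_k$, and set $\delta_k=p^{-1}E[\|S_k-M_k\|_F^2]>0$, $c_{ij}=p^{-1}\operatorname{tr}(M_iM_j)$, $D=\operatorname{diag}(\delta_1,\ldots,\delta_K)$, $C=(c_{ij})$, $c_k$ the $k$-th column of $C$. Then the function $a\mapsto E[\|\sum_{i=1}^K a_iS_i - M_k\|_F^2]$ over $a\in\mathbb{R}^K$ attains its unique global minimum at $a_k^\star = (D+C)^{-1}c_k$. -/

import Mathlib

open MeasureTheory Matrix ProbabilityTheory Filter Asymptotics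

noncomputable section

/-- Borel/pi measurable structure on matrices (a matrix is a function of its entries). -/
instance matrixMeasurableSpace {p : ℕ} : MeasurableSpace (Matrix (Fin p) (Fin p) ℝ) :=
  inferInstanceAs (MeasurableSpace (Fin p → Fin p → ℝ))

/-- Squared Frobenius norm `‖A‖_F² = tr(Aᵀ A)`. -/
def frobSq {p : ℕ} (A : Matrix (Fin p) (Fin p) ℝ) : ℝ := (Aᵀ * A).trace

/-- Entrywise expectation of a random matrix. -/
def matExp {Ω : Type*} [MeasurableSpace Ω] (μ : Measure Ω) {p : ℕ}
    (S : Ω → Matrix (Fin p) (Fin p) ℝ) : Matrix (Fin p) (Fin p) ℝ :=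
  Matrix.of fun i j => ∫ ω, S ω i j ∂μ

/-! Entrywise, independence kills the cross terms of `E[(∑ aᵢ Sᵢ - M_k)²]`, so the risk splits into
squared bias plus weighted variances: `f a = p ((a - e_k)ᵀ C (a - e_k) + aᵀ D a)`. Here `D + C` is
positive definite (`D` is a positive diagonal, `C` a Frobenius Gram matrix), `a⋆` solves the
normal equations `(D + C) a = C e_k = c_k`, and completing the square gives
`f a - f a⋆ = p (a - a⋆)ᵀ (D + C) (a - a⋆) > 0`. -/

lemma dotProduct_mulVec_comm_of_transpose_eq {n R : Type*} [Fintype n] [CommSemiring R]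
    {A : Matrix n n R} (hA : Aᵀ = A) (u v : n → R) : u ⬝ᵥ A *ᵥ v = v ⬝ᵥ A *ᵥ u := by
  rw [dotProduct_mulVec, ← mulVec_transpose, hA, dotProduct_comm]

lemma quadratic_sub_quadratic_of_mulVec_eq {n R : Type*} [Fintype n] [CommRing R]
    {C D : Matrix n n R} (hC : Cᵀ = C) (hD : Dᵀ = D) {x e : n → R}
    (hx : (D + C) *ᵥ x = C *ᵥ e) (y : n → R) :
    ((y - e) ⬝ᵥ C *ᵥ (y - e) + y ⬝ᵥ D *ᵥ y) - ((x - e) ⬝ᵥ C *ᵥ (x - e) + x ⬝ᵥ D *ᵥ x)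
      = (y - x) ⬝ᵥ (D + C) *ᵥ (y - x) := by
  have hy : y ⬝ᵥ D *ᵥ x + y ⬝ᵥ C *ᵥ x = y ⬝ᵥ C *ᵥ e := by
    rw [← hx, add_mulVec, dotProduct_add]
  have hx' : x ⬝ᵥ D *ᵥ x + x ⬝ᵥ C *ᵥ x = x ⬝ᵥ C *ᵥ e := by
    rw [← hx, add_mulVec, dotProduct_add]
  simp only [mulVec_sub, add_mulVec, sub_dotProduct, dotProduct_sub, dotProduct_add,
    dotProduct_mulVec_comm_of_transpose_eq hC e, dotProduct_mulVec_comm_of_transpose_eq hC x y,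
    dotProduct_mulVec_comm_of_transpose_eq hD x y]
  linear_combination 2 * hy - 2 * hx'

lemma quadratic_lt_of_posDef {n : Type*} [Fintype n] {C D : Matrix n n ℝ} (hC : Cᵀ = C)
    (hD : Dᵀ = D) (hDC : (D + C).PosDef) {x e : n → ℝ} (hx : (D + C) *ᵥ x = C *ᵥ e)
    {y : n → ℝ} (hy : y ≠ x) :
    (x - e) ⬝ᵥ C *ᵥ (x - e) + x ⬝ᵥ D *ᵥ x < (y - e) ⬝ᵥ C *ᵥ (y - e) + y ⬝ᵥ D *ᵥ y := by
  have h := hDC.dotProduct_mulVec_pos (sub_ne_zero.mpr hy)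
  rw [star_trivial, ← quadratic_sub_quadratic_of_mulVec_eq hC hD hx y] at h
  linarith

lemma dotProduct_diagonal_mulVec_self {n R : Type*} [Fintype n] [DecidableEq n] [CommSemiring R]
    (d b : n → R) :
    b ⬝ᵥ diagonal d *ᵥ b = ∑ i, b i ^ 2 * d i := by
  simp only [dotProduct, mulVec_diagonal]
  exact Finset.sum_congr rfl fun i _ => by ring

lemma sum_smul_sub_eq_sum_sub_single_smul {ι R M : Type*} [Fintype ι] [DecidableEq ι] [Ring R]
    [AddCommGroup M] [Module R M] (A : ι → M) (b : ι → R) (k : ι) :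
    ∑ i, b i • A i - A k = ∑ i, (b - Pi.single k 1 : ι → R) i • A i := by
  simp [sub_smul, Finset.sum_sub_distrib, Pi.single_apply]

lemma frobSq_eq_sum_sq {p : ℕ} (A : Matrix (Fin p) (Fin p) ℝ) :
    frobSq A = ∑ r, ∑ c, A r c ^ 2 := by
  simp only [frobSq, trace, diag, mul_apply, transpose_apply, sq]
  exact Finset.sum_comm

lemma frobSq_nonneg {p : ℕ} (A : Matrix (Fin p) (Fin p) ℝ) : 0 ≤ frobSq A := by
  rw [frobSq_eq_sum_sq]
  positivity

lemma frobSq_sum_smul {ι : Type*} [Fintype ι] {p : ℕ} (A : ι → Matrix (Fin p) (Fin p) ℝ)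
    (u : ι → ℝ) :
    frobSq (∑ i, u i • A i) = u ⬝ᵥ (of fun i j => ((A i)ᵀ * A j).trace) *ᵥ u := by
  simp only [frobSq, transpose_sum, transpose_smul, Finset.sum_mul, Finset.mul_sum,
    Matrix.smul_mul, Matrix.mul_smul, trace_sum, trace_smul, smul_eq_mul, dotProduct, mulVec,
    of_apply]
  exact Finset.sum_comm.trans
    (Finset.sum_congr rfl fun i _ => Finset.sum_congr rfl fun j _ => by ring)

lemma posSemidef_trace_transpose_mul {ι : Type*} [Fintype ι] {p : ℕ}
    (A : ι → Matrix (Fin p) (Fin p) ℝ) :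
    (of fun i j => ((A i)ᵀ * A j).trace).PosSemidef := by
  refine .of_dotProduct_mulVec_nonneg ?_ fun u => ?_
  · ext i j
    rw [conjTranspose_eq_transpose_of_trivial, transpose_apply, of_apply, of_apply,
      ← trace_transpose, transpose_mul, transpose_transpose]
  · rw [star_trivial, ← frobSq_sum_smul]
    exact frobSq_nonneg _

lemma matExp_transpose {Ω : Type*} [MeasurableSpace Ω] (μ : Measure Ω) {p : ℕ}
    (S : Ω → Matrix (Fin p) (Fin p) ℝ) :
    (matExp μ S)ᵀ = matExp μ fun ω => (S ω)ᵀ :=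
  rfl

section Risk

variable {Ω : Type*} [MeasurableSpace Ω] {μ : Measure Ω} [IsProbabilityMeasure μ]

lemma integral_sq_linearComb_sub {ι : Type*} [Fintype ι] {Y : ι → Ω → ℝ}
    (hY : ∀ i, MemLp (Y i) 2 μ) (hind : Pairwise fun i j => IndepFun (Y i) (Y j) μ)
    (b : ι → ℝ) (t : ℝ) :
    ∫ ω, (∑ i, b i * Y i ω - t) ^ 2 ∂μ
      = (∑ i, b i * μ[Y i] - t) ^ 2 + ∑ i, b i ^ 2 * Var[Y i; μ] := by
  have hbY : ∀ i, MemLp (fun ω => b i * Y i ω) 2 μ := fun i => (hY i).const_mul (b i)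
  have hsum : MemLp (fun ω => ∑ i, b i * Y i ω) 2 μ := memLp_finsetSum _ fun i _ => hbY i
  have hmean : μ[fun ω => ∑ i, b i * Y i ω - t] = ∑ i, b i * μ[Y i] - t := by
    rw [integral_sub (hsum.integrable one_le_two) (integrable_const t),
      integral_finsetSum _ fun i _ => (hbY i).integrable one_le_two]
    simp [integral_const_mul]
  have hvar : Var[fun ω => ∑ i, b i * Y i ω - t; μ] = ∑ i, b i ^ 2 * Var[Y i; μ] := by
    have h := IndepFun.variance_sum (X := fun i ω => b i * Y i ω) (s := Finset.univ)
      (fun i _ => hbY i) fun i _ j _ hij =>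
        (hind hij).comp (measurable_const_mul (b i)) (measurable_const_mul (b j))
    simp only [Finset.sum_fn, variance_const_mul] at h
    rw [variance_sub_const hsum.aestronglyMeasurable, h]
  have hZ : MemLp (fun ω => ∑ i, b i * Y i ω - t) 2 μ := hsum.sub (memLp_const t)
  have h := variance_eq_sub hZ
  rw [hvar, hmean] at h
  simp only [Pi.pow_apply] at h
  linarith

lemma integral_frobSq_sub_matExp {p : ℕ} {S : Ω → Matrix (Fin p) (Fin p) ℝ}
    (hS : ∀ r c, MemLp (fun ω => S ω r c) 2 μ) :
    ∫ ω, frobSq (S ω - matExp μ S) ∂μ = ∑ r, ∑ c, Var[fun ω => S ω r c; μ] := by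
  have hsq : ∀ r c, Integrable (fun ω => (S ω r c - μ[fun ω => S ω r c]) ^ 2) μ :=
    fun r c => ((hS r c).sub (memLp_const _)).integrable_sq
  simp only [frobSq_eq_sum_sq, Matrix.sub_apply, matExp, of_apply]
  rw [integral_finsetSum _ fun r _ => integrable_finsetSum _ fun c _ => hsq r c]
  refine Finset.sum_congr rfl fun r _ => ?_
  rw [integral_finsetSum _ fun c _ => hsq r c]
  exact Finset.sum_congr rfl fun c _ => (variance_eq_integral (hS r c).aemeasurable).symm

lemma integral_frobSq_sum_smul_sub {ι : Type*} [Fintype ι] {p : ℕ}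
    {S : ι → Ω → Matrix (Fin p) (Fin p) ℝ} (hS : ∀ i r c, MemLp (fun ω => S i ω r c) 2 μ)
    (hind : Pairwise fun i j => IndepFun (S i) (S j) μ) (b : ι → ℝ)
    (T : Matrix (Fin p) (Fin p) ℝ) :
    ∫ ω, frobSq (∑ i, b i • S i ω - T) ∂μ
      = frobSq (∑ i, b i • matExp μ (S i) - T)
        + ∑ i, b i ^ 2 * ∫ ω, frobSq (S i ω - matExp μ (S i)) ∂μ := by
  have hentry : ∀ r c, Measurable fun A : Matrix (Fin p) (Fin p) ℝ => A r c :=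
    fun r c => (measurable_pi_apply c).comp (measurable_pi_apply r)
  have hsq : ∀ r c, Integrable (fun ω => (∑ i, b i * S i ω r c - T r c) ^ 2) μ :=
    fun r c => ((memLp_finsetSum _ fun i _ => (hS i r c).const_mul (b i)).sub
      (memLp_const _)).integrable_sq
  have hrc : ∀ r c, ∫ ω, (∑ i, b i * S i ω r c - T r c) ^ 2 ∂μ
      = (∑ i, b i * μ[fun ω => S i ω r c] - T r c) ^ 2
        + ∑ i, b i ^ 2 * Var[fun ω => S i ω r c; μ] :=
    fun r c => integral_sq_linearComb_sub (fun i => hS i r c)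
      (fun i j hij => (hind hij).comp (hentry r c) (hentry r c)) b (T r c)
  have hvar : ∀ i, ∫ ω, frobSq (S i ω - matExp μ (S i)) ∂μ
      = ∑ r, ∑ c, Var[fun ω => S i ω r c; μ] := fun i => integral_frobSq_sub_matExp (hS i)
  simp only [hvar]
  simp only [frobSq_eq_sum_sq, Matrix.sub_apply, Matrix.sum_apply,
    Matrix.smul_apply, smul_eq_mul, matExp, of_apply]
  rw [integral_finsetSum _ fun r _ => integrable_finsetSum _ fun c _ => hsq r c]
  simp only [integral_finsetSum _ fun c _ => hsq _ c, hrc, Finset.sum_add_distrib, Finset.mul_sum]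
  congr 1
  exact (Finset.sum_comm.trans (Finset.sum_congr rfl fun _ _ => Finset.sum_comm)).symm

end Risk

theorem unconstrained_optimal_coefficients_general
    {Ω : Type*} [MeasurableSpace Ω] (μ : Measure Ω) [IsProbabilityMeasure μ]
    (p K : ℕ) (hp : 0 < p)
    (S : Fin K → Ω → Matrix (Fin p) (Fin p) ℝ)
    (hsymm : ∀ k ω, (S k ω)ᵀ = S k ω)
    (hL2 : ∀ k i j, MemLp (fun ω => S k ω i j) 2 μ)
    (hindep : iIndepFun S μ)
    (M : Fin K → Matrix (Fin p) (Fin p) ℝ)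
    (hM : ∀ k, matExp μ (S k) = M k)
    (δ : Fin K → ℝ)
    (hδ : ∀ k, δ k = (p : ℝ)⁻¹ * ∫ ω, frobSq (S k ω - M k) ∂μ)
    (hδpos : ∀ k, 0 < δ k)
    (C : Matrix (Fin K) (Fin K) ℝ)
    (hC : ∀ i j, C i j = (p : ℝ)⁻¹ * (M i * M j).trace)
    (D : Matrix (Fin K) (Fin K) ℝ) (hD : D = Matrix.diagonal δ)
    (astar : Fin K → Fin K → ℝ)
    (hastar : ∀ k, astar k = (D + C)⁻¹ *ᵥ (fun i => C i k)) :
    ∀ (k : Fin K) (a : Fin K → ℝ), a ≠ astar k →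
      ∫ ω, frobSq (∑ i, astar k i • S i ω - M k) ∂μ
        < ∫ ω, frobSq (∑ i, a i • S i ω - M k) ∂μ := by
  intro k a hne
  have hp0 : (p : ℝ) ≠ 0 := Nat.cast_ne_zero.mpr hp.ne'
  have hMsymm : ∀ i, (M i)ᵀ = M i := fun i => by
    rw [← hM, matExp_transpose]
    simp only [hsymm]
  have hCgram : C = (p : ℝ)⁻¹ • of fun i j => ((M i)ᵀ * M j).trace := by
    ext i j
    simp [hC, hMsymm]
  have hCpsd : C.PosSemidef :=
    hCgram ▸ (posSemidef_trace_transpose_mul M).smul (by positivity)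
  have hCsymm : Cᵀ = C := by
    simpa only [conjTranspose_eq_transpose_of_trivial] using hCpsd.isHermitian.eq
  have hDC : (D + C).PosDef := hD ▸ (PosDef.diagonal hδpos).add_posSemidef hCpsd
  have hnormal : (D + C) *ᵥ astar k = C *ᵥ Pi.single k 1 := by
    rw [hastar, mulVec_mulVec, mul_nonsing_inv _ ((isUnit_iff_isUnit_det _).mp hDC.isUnit),
      one_mulVec, mulVec_single_one]
    rfl
  have hgram : (of fun i j => ((M i)ᵀ * M j).trace) = (p : ℝ) • C := by
    rw [hCgram, smul_smul, mul_inv_cancel₀ hp0, one_smul]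
  have hvar : ∀ i, ∫ ω, frobSq (S i ω - M i) ∂μ = p * δ i := fun i => by
    rw [hδ, mul_inv_cancel_left₀ hp0]
  have hrisk : ∀ b, ∫ ω, frobSq (∑ i, b i • S i ω - M k) ∂μ
      = p * ((b - Pi.single k 1) ⬝ᵥ C *ᵥ (b - Pi.single k 1) + b ⬝ᵥ D *ᵥ b) := by
    intro b
    rw [integral_frobSq_sum_smul_sub hL2 (fun i j hij => hindep.indepFun hij) b]
    simp only [hM]
    rw [sum_smul_sub_eq_sum_sub_single_smul, frobSq_sum_smul, hD, dotProduct_diagonal_mulVec_self]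
    rw [hgram, smul_mulVec, dotProduct_smul, smul_eq_mul, mul_add, Finset.mul_sum]
    simp only [hvar]
    exact congrArg _ (Finset.sum_congr rfl fun i _ => by ring)
  rw [hrisk, hrisk]
  exact mul_lt_mul_of_pos_left
    (quadratic_lt_of_posDef hCsymm (hD ▸ diagonal_transpose δ) hDC hnormal hne) (by positivity)

/-- Proposition 2 of the paper: the unconstrained MSE
`a ↦ E‖∑ᵢ aᵢSᵢ − M_k‖_F²` attains its unique global minimum at
`a⋆ₖ = (D+C)⁻¹ cₖ`. -/
theorem unconstrained_optimal_coefficients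
    {Ω : Type*} [MeasurableSpace Ω] (μ : Measure Ω) [IsProbabilityMeasure μ]
    (p K : ℕ) (hp : 0 < p)
    (S : Fin K → Ω → Matrix (Fin p) (Fin p) ℝ)
    (hmeas : ∀ k, Measurable (S k))
    (hsymm : ∀ k ω, (S k ω)ᵀ = S k ω)
    (hL2 : ∀ k i j, MemLp (fun ω => S k ω i j) 2 μ)
    (hindep : iIndepFun S μ)
    (M : Fin K → Matrix (Fin p) (Fin p) ℝ)
    (hM : ∀ k, matExp μ (S k) = M k)
    (δ : Fin K → ℝ)
    (hδ : ∀ k, δ k = (p : ℝ)⁻¹ * ∫ ω, frobSq (S k ω - M k) ∂μ)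
    (hδpos : ∀ k, 0 < δ k)
    (C : Matrix (Fin K) (Fin K) ℝ)
    (hC : ∀ i j, C i j = (p : ℝ)⁻¹ * (M i * M j).trace)
    (D : Matrix (Fin K) (Fin K) ℝ) (hD : D = Matrix.diagonal δ)
    (astar : Fin K → Fin K → ℝ)
    (hastar : ∀ k, astar k = (D + C)⁻¹ *ᵥ (fun i => C i k)) :
    ∀ (k : Fin K) (a : Fin K → ℝ), a ≠ astar k →
      ∫ ω, frobSq (∑ i, astar k i • S i ω - M k) ∂μ
        < ∫ ω, frobSq (∑ i, a i • S i ω - M k) ∂μ :=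
  unconstrained_optimal_coefficients_general μ p K hp S hsymm hL2 hindep M hM δ hδ hδpos C hC D hD
    astar hastar
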